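/- arXiv:2112.05377 — 5 statements merged into one kernel-verified Lean document; each statement's English description precedes it below -/
import Mathlib

section
/- For a linear $[n,k,d]$ code $\mathcal{C}$ over $GF(q)$ with $k \geq 2$ and Singleton defect $s = n - k + 1 - d$, the minimum distance satisfies $d \leq q(s+1)$. -/
open scoped Classical

/-- Hamming weight of a vector. -/
noncomputable def wt {ι F : Type*} [Fintype ι] [Zero F] (x : ι → F) : ℕ :=
  (Finset.univ.filter (fun i => x i ≠ 0)).card

/-- Minimum distance of a linear code (minimum weight of a nonzero codeword). -/
noncomputable def minDist {ι F : Type*} [Fintype ι] [Field F]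
    (C : Submodule F (ι → F)) : ℕ :=
  sInf {w | ∃ c ∈ C, c ≠ 0 ∧ wt c = w}

/-!
Let `c` be a codeword of minimum weight `d`, with support `S`. By the Singleton bound `S` misses
at least `k - 1` coordinates; pick a set `T` of `k - 2` of them. The codewords vanishing on `T`
form a space of dimension at least `2`, so one of them, `x`, lies outside the span of `c`. Every
`x - l • c` is then a nonzero codeword vanishing on `T`, and each coordinate in `S` vanishes for
exactly one `l : F`, so for some `l` at most `d (q - 1) / q` coordinates in `S` are nonzero.
Outside `S ∪ T` there are only `n - d - (k - 2) = s + 1` coordinates, hence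
`d ≤ d (q - 1) / q + s + 1`, that is `d ≤ q (s + 1)`.
-/

open Finset Module

section

variable {ι F : Type*} [Field F]

theorem minDist_le_wt [Fintype ι] {C : Submodule F (ι → F)} {y : ι → F} (hy : y ∈ C)
    (hy0 : y ≠ 0) : minDist C ≤ wt y :=
  Nat.sInf_le ⟨y, hy, hy0, rfl⟩

theorem exists_wt_eq_minDist [Fintype ι] {C : Submodule F (ι → F)} (hC : C ≠ ⊥) :
    ∃ c ∈ C, c ≠ 0 ∧ wt c = minDist C := by
  obtain ⟨c, hc, hc0⟩ := Submodule.exists_mem_ne_zero_of_ne_bot hC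
  exact Nat.sInf_mem (s := {w | ∃ c ∈ C, c ≠ 0 ∧ wt c = w}) ⟨wt c, c, hc, hc0, rfl⟩

theorem wt_add_card_add_card_le [Fintype ι] {y : ι → F} {S T : Finset ι} (hST : Disjoint S T)
    (hy : ∀ i ∈ T, y i = 0) :
    wt y + #S + #T ≤ Fintype.card ι + #{i ∈ S | y i ≠ 0} := by
  have hsupp : ({i | y i ≠ 0} : Finset ι) ⊆ {i ∈ S | y i ≠ 0} ∪ (S ∪ T)ᶜ := by
    intro i hi
    simp only [mem_filter, mem_univ, true_and] at hi
    by_cases hiS : i ∈ S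
    · simp [hiS, hi]
    · have hiT : i ∉ T := fun hiT => hi (hy i hiT)
      simp [hiS, hiT]
  have hcard := (card_le_card hsupp).trans (card_union_le _ _)
  have hST_le := card_le_univ (S ∪ T)
  rw [card_compl, card_union_of_disjoint hST] at hcard
  rw [card_union_of_disjoint hST] at hST_le
  unfold wt
  omega

theorem finrank_sub_card_le_finrank_inf_ker_funLeft [Finite ι] (C : Submodule F (ι → F))
    (T : Finset ι) :
    finrank F C - #T ≤
      finrank F ↥(C ⊓ LinearMap.ker (LinearMap.funLeft F F ((↑) : T → ι))) := by
  let ψ := (LinearMap.funLeft F F ((↑) : T → ι)).domRestrict C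
  have hrange : finrank F (LinearMap.range ψ) ≤ #T :=
    (Submodule.finrank_le _).trans_eq (by simp)
  have hker : finrank F (LinearMap.ker ψ) =
      finrank F ↥(C ⊓ LinearMap.ker (LinearMap.funLeft F F ((↑) : T → ι))) := by
    rw [← Submodule.map_comap_subtype, Submodule.finrank_map_subtype_eq,
      ← LinearMap.ker_domRestrict]
  have := ψ.finrank_range_add_finrank_ker
  omega

theorem exists_mem_forall_eq_zero_notMem [Finite ι] {C U : Submodule F (ι → F)} {T : Finset ι}
    (h : finrank F U + #T < finrank F C) : ∃ x ∈ C, (∀ i ∈ T, x i = 0) ∧ x ∉ U := by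
  by_contra! hU
  have hle : C ⊓ LinearMap.ker (LinearMap.funLeft F F ((↑) : T → ι)) ≤ U := by
    rintro x ⟨hxC, hxT⟩
    exact hU x hxC fun i hi => congrFun (LinearMap.mem_ker.mp hxT) ⟨i, hi⟩
  have := finrank_sub_card_le_finrank_inf_ker_funLeft C T
  have := Submodule.finrank_mono hle
  omega

theorem minDist_add_finrank_le [Fintype ι] {C : Submodule F (ι → F)} (hC : C ≠ ⊥) :
    minDist C + finrank F C ≤ Fintype.card ι + 1 := by
  have hk : finrank F C ≠ 0 := mt Submodule.finrank_eq_zero.mp hC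
  have hkn : finrank F C ≤ Fintype.card ι := (Submodule.finrank_le C).trans_eq (by simp)
  obtain ⟨T, -, hT⟩ := exists_subset_card_eq (s := (univ : Finset ι)) (n := finrank F C - 1)
    (by simp; omega)
  obtain ⟨y, hyC, hyT, hy0⟩ := exists_mem_forall_eq_zero_notMem (C := C) (U := ⊥) (T := T)
    (by rw [finrank_bot, hT]; omega)
  have hmin := minDist_le_wt hyC (by simpa using hy0)
  have hwt := wt_add_card_add_card_le (disjoint_empty_left T) hyT
  simp only [card_empty, filter_empty] at hwt
  omega

noncomputable def singletonDefect [Fintype ι] (C : Submodule F (ι → F)) : ℕ :=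
  Fintype.card ι + 1 - finrank F C - minDist C

theorem natCast_singletonDefect [Fintype ι] {C : Submodule F (ι → F)} (hC : C ≠ ⊥) :
    (singletonDefect C : ℤ) = Fintype.card ι - finrank F C + 1 - minDist C := by
  have := minDist_add_finrank_le hC
  unfold singletonDefect
  omega

theorem sum_card_filter_sub_smul_ne_zero [Fintype F] (S : Finset ι) (x c : ι → F)
    (hc : ∀ i ∈ S, c i ≠ 0) :
    ∑ l : F, #{i ∈ S | (x - l • c) i ≠ 0} = #S * (Fintype.card F - 1) := by
  simp_rw [card_filter]
  rw [sum_comm]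
  calc ∑ i ∈ S, ∑ l : F, (if (x - l • c) i ≠ 0 then 1 else 0)
      = ∑ i ∈ S, #({l | l ≠ x i / c i} : Finset F) := by
        refine sum_congr rfl fun i hi => ?_
        rw [card_filter]
        refine sum_congr rfl fun l _ => ?_
        simp only [Pi.sub_apply, Pi.smul_apply, smul_eq_mul, ne_eq, sub_eq_zero,
          eq_div_iff (hc i hi), eq_comm]
    _ = #S * (Fintype.card F - 1) := by
        simp [filter_ne', card_erase_of_mem]

theorem exists_card_mul_card_filter_sub_smul_ne_zero_le [Fintype F] (S : Finset ι)
    (x c : ι → F) (hc : ∀ i ∈ S, c i ≠ 0) :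
    ∃ l : F,
      Fintype.card F * #{i ∈ S | (x - l • c) i ≠ 0} ≤ #S * (Fintype.card F - 1) := by
  have hsum : ∑ l : F, Fintype.card F * #{i ∈ S | (x - l • c) i ≠ 0} =
      ∑ _l : F, #S * (Fintype.card F - 1) := by
    rw [← mul_sum, sum_card_filter_sub_smul_ne_zero S x c hc, sum_const, card_univ,
      smul_eq_mul]
  obtain ⟨l, -, hl⟩ := exists_le_of_sum_le univ_nonempty hsum.le
  exact ⟨l, hl⟩

theorem minDist_le_card_mul_singletonDefect_add_one [Fintype ι] [Fintype F]
    {C : Submodule F (ι → F)} (hk : 2 ≤ finrank F C) :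
    minDist C ≤ Fintype.card F * (singletonDefect C + 1) := by
  have hC : C ≠ ⊥ := fun h => by rw [h, finrank_bot] at hk; omega
  obtain ⟨c, hcC, hc0, hc⟩ := exists_wt_eq_minDist hC
  set S : Finset ι := {i | c i ≠ 0} with hS
  have hSd : #S = minDist C := hc
  have hsingleton := minDist_add_finrank_le hC
  obtain ⟨T, hTS, hT⟩ := exists_subset_card_eq (s := Sᶜ) (n := finrank F C - 2)
    (by rw [card_compl, hSd]; omega)
  obtain ⟨x, hxC, hxT, hxc⟩ := exists_mem_forall_eq_zero_notMem (C := C) (U := F ∙ c) (T := T)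
    (by rw [finrank_span_singleton hc0, hT]; omega)
  obtain ⟨l, hl⟩ := exists_card_mul_card_filter_sub_smul_ne_zero_le S x c
    (fun i hi => (mem_filter.mp hi).2)
  have hyC : x - l • c ∈ C := C.sub_mem hxC (C.smul_mem l hcC)
  have hy0 : x - l • c ≠ 0 := fun h =>
    hxc (sub_eq_zero.mp h ▸ Submodule.smul_mem _ l (Submodule.mem_span_singleton_self c))
  have hyT : ∀ i ∈ T, (x - l • c) i = 0 := fun i hi => by
    have hci : c i = 0 := by simpa [hS] using hTS hi
    simp [hxT i hi, hci]
  have hmin := minDist_le_wt hyC hy0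
  have hwt := wt_add_card_add_card_le (disjoint_of_subset_right hTS disjoint_compl_right) hyT
  have hd : minDist C ≤ #{i ∈ S | (x - l • c) i ≠ 0} + (singletonDefect C + 1) := by
    unfold singletonDefect
    omega
  have hqd := Nat.mul_le_mul_left (Fintype.card F) hd
  rw [hSd] at hl
  zify [Fintype.card_pos (α := F)] at hl hqd ⊢
  linarith

end

theorem stmt_0 {F : Type*} [Field F] [Fintype F] {n q k d s : ℕ}
    (C : Submodule F (Fin n → F))
    (hq : Fintype.card F = q)
    (hk : Module.finrank F C = k)
    (hd : minDist C = d)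
    (hk2 : 2 ≤ k)
    (hs : (s : ℤ) = (n : ℤ) - (k : ℤ) + 1 - (d : ℤ)) :
    d ≤ q * (s + 1) := by
  have hC : C ≠ ⊥ := fun h => by rw [h, finrank_bot] at hk; omega
  have hs' : s = singletonDefect C := by
    have := natCast_singletonDefect hC
    rw [hk, hd, Fintype.card_fin] at this
    omega
  rw [← hd, ← hq, hs']
  exact minDist_le_card_mul_singletonDefect_add_one (hk ▸ hk2)
end

section
/- In the $[6,3,4]$ MDS code over $GF(4)$ generated by the matrix with rows $(1,0,0,1,1,1)$, $(0,1,0,1,\alpha,\alpha^2)$, $(0,0,1,1,\alpha^2,\alpha)$ (where $\alpha$ is a primitive cube root of unity in $GF(4)$), if two codewords of weight 6 are not scalar multiples of each other, then their sum has Hamming weight 4. -/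
open scoped Classical

/-!
For codewords `c, c'` without zero coordinates, each coordinate has a ratio `c' i / c i` in
`GF(4)ˣ`. For `t ≠ 0` the codeword `c' - t • c` is nonzero, so by minimum distance `4` the ratio
`t` occurs at most `6 - 4 = 2` times; six coordinates and three possible ratios force every
ratio to occur exactly twice. `c + c'` vanishes exactly where the ratio is `-1`, so its weight
is `6 - 2 = 4`. The minimum distance of the hexacode is checked by computation, after
transporting it to a computable model of `GF(4)`.
-/

open Finset

section Weight

variable {ι F : Type*} [Fintype ι]

lemma wt_add_card_filter_eq_zero [Zero F] (x : ι → F) :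
    wt x + #{i | x i = 0} = Fintype.card ι := by
  rw [wt]
  simpa using card_filter_add_card_filter_not (s := univ) (fun i => x i ≠ 0)

lemma wt_eq_card_iff [Zero F] {x : ι → F} : wt x = Fintype.card ι ↔ ∀ i, x i ≠ 0 := by
  rw [wt, card_eq_iff_eq_univ, filter_eq_self]
  simp

lemma wt_comp_of_injective {G : Type*} [Zero F] [Zero G] {f : F → G}
    (hf : Function.Injective f) (hf0 : f 0 = 0) (x : ι → F) : wt (f ∘ x) = wt x := by
  simp only [wt, Function.comp_apply, ← hf0, hf.ne_iff]

end Weight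

section Ratio

variable {ι F : Type*} [Fintype ι] [Field F] {C : Submodule F (ι → F)} {d : ℕ}
  {c c' : ι → F}

lemma sum_card_filter_eq_mul [Fintype F] (hc : ∀ i, c i ≠ 0) :
    ∑ t : F, #{i | c' i = t * c i} = Fintype.card ι := by
  rw [← card_univ, card_eq_sum_card_fiberwise (f := fun i => c' i / c i) (t := univ)
    (fun _ _ => mem_coe.2 (mem_univ _))]
  refine sum_congr rfl fun t _ => congrArg card (filter_congr fun i _ => ?_)
  rw [div_eq_iff (hc i), eq_comm]

lemma card_filter_eq_mul_add_le (hC : ∀ x ∈ C, x ≠ 0 → d ≤ wt x) (hc : c ∈ C) (hc' : c' ∈ C)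
    (hns : ∀ t : F, c' ≠ t • c) (t : F) :
    #{i | c' i = t * c i} + d ≤ Fintype.card ι := by
  have hle := hC _ (C.sub_mem hc' (C.smul_mem t hc)) (sub_ne_zero.2 (hns t))
  have hsum := wt_add_card_filter_eq_zero (c' - t • c)
  simp only [Pi.sub_apply, Pi.smul_apply, smul_eq_mul, sub_eq_zero] at hsum
  omega

theorem card_filter_eq_mul_of_card_eq_mul [Fintype F] (hC : ∀ x ∈ C, x ≠ 0 → d ≤ wt x)
    (hn : Fintype.card ι = (Fintype.card F - 1) * (Fintype.card ι - d))
    (hc : c ∈ C) (hc' : c' ∈ C) (hw : ∀ i, c i ≠ 0) (hw' : ∀ i, c' i ≠ 0)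
    (hns : ∀ t : F, c' ≠ t • c) {t : F} (ht : t ≠ 0) :
    #{i | c' i = t * c i} = Fintype.card ι - d := by
  have hle := card_filter_eq_mul_add_le hC hc hc' hns
  have h0 : #{i | c' i = 0 * c i} = 0 := by simpa using hw'
  have hsum : ∑ s ∈ univ.erase 0, #{i | c' i = s * c i} =
      ∑ s ∈ univ.erase (0 : F), (Fintype.card ι - d) := by
    rw [sum_const, card_erase_of_mem (mem_univ _), card_univ, smul_eq_mul, ← hn]
    have := add_sum_erase univ (fun s => #{i | c' i = s * c i}) (mem_univ 0)
    rw [h0, sum_card_filter_eq_mul hw] at this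
    omega
  exact (sum_eq_sum_iff_of_le fun s _ => Nat.le_sub_of_add_le (hle s)).1 hsum t
    (mem_erase.2 ⟨ht, mem_univ _⟩)

theorem wt_add_eq_of_card_eq_mul [Fintype F] (hC : ∀ x ∈ C, x ≠ 0 → d ≤ wt x)
    (hn : Fintype.card ι = (Fintype.card F - 1) * (Fintype.card ι - d)) (hc : c ∈ C) (hc' : c' ∈ C)
    (hw : wt c = Fintype.card ι) (hw' : wt c' = Fintype.card ι)
    (hns : ∀ t : F, c' ≠ t • c) :
    wt (c + c') = d := by
  have hN := card_filter_eq_mul_of_card_eq_mul hC hn hc hc' (wt_eq_card_iff.1 hw)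
    (wt_eq_card_iff.1 hw') hns (neg_ne_zero.2 one_ne_zero)
  have hd := card_filter_eq_mul_add_le hC hc hc' hns 0
  have hsum := wt_add_card_filter_eq_zero (c + c')
  have hzero : #{i | (c + c') i = 0} = #{i | c' i = -1 * c i} :=
    congrArg card (filter_congr fun i _ => by
      rw [Pi.add_apply, neg_one_mul, eq_neg_iff_add_eq_zero, add_comm])
  rw [hzero] at hsum
  omega

end Ratio

def hexacodeWord {R : Type*} [CommRing R] (w a b d : R) : Fin 6 → R :=
  ![a, b, d, a + b + d, a + b * w + d * w ^ 2, a + b * w ^ 2 + d * w]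

def hexacode {K : Type*} [Field K] (w : K) : Submodule K (Fin 6 → K) :=
  Submodule.span K {![1,0,0,1,1,1], ![0,1,0,1,w,w^2], ![0,0,1,1,w^2,w]}

lemma mem_hexacode_iff {K : Type*} [Field K] {w : K} {x : Fin 6 → K} :
    x ∈ hexacode w ↔ ∃ a b d, hexacodeWord w a b d = x := by
  have hword : ∀ a b d : K, a • ![1,0,0,1,1,1] + b • ![0,1,0,1,w,w^2] + d • ![0,0,1,1,w^2,w] =
      hexacodeWord w a b d := by
    intro a b d
    ext i
    fin_cases i <;> simp [hexacodeWord]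
  simp only [hexacode, Submodule.mem_span_triple, hword]

lemma map_comp_hexacodeWord {R S G : Type*} [CommRing R] [CommRing S] [FunLike G R S]
    [RingHomClass G R S] (f : G) (w a b d : R) :
    f ∘ hexacodeWord w a b d = hexacodeWord (f w) (f a) (f b) (f d) := by
  ext i
  fin_cases i <;> simp [hexacodeWord]

/-- `𝔽₂[ω]` with `ω ^ 2 = 1 + ω`: a copy of `GF(4)` on which `decide` can compute. -/
abbrev F4 := QuadraticAlgebra (ZMod 2) 1 1

namespace F4

open QuadraticAlgebra

instance : Fintype F4 := Fintype.ofEquiv _ (equivProd 1 1).symm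

instance : Fact (∀ r : ZMod 2, r ^ 2 ≠ 1 + 1 * r) := ⟨by decide⟩

theorem four_le_card_hexacodeWord : ∀ a b d : F4, (a, b, d) ≠ 0 →
    4 ≤ #{i | hexacodeWord ω a b d i ≠ 0} := by
  decide

variable {K : Type*} [Field K] [Algebra (ZMod 2) K] {α : K}

noncomputable def lift (hα : α ^ 2 + α + 1 = 0) : F4 →ₐ[ZMod 2] K :=
  QuadraticAlgebra.lift ⟨α, by
    have h2 : (2 : K) = 0 := by
      rw [← map_ofNat (algebraMap (ZMod 2) K) 2, show (2 : ZMod 2) = 0 from rfl, map_zero]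
    simp only [one_smul]
    linear_combination hα - (α + 1) * h2⟩

@[simp]
lemma lift_omega (hα : α ^ 2 + α + 1 = 0) : lift hα ω = α := by
  simp [lift]

lemma lift_bijective (hK : Nat.card K = 4) (hα : α ^ 2 + α + 1 = 0) :
    Function.Bijective (lift hα) := by
  have : Finite K := Nat.finite_of_card_ne_zero (by omega)
  refine (Nat.bijective_iff_injective_and_card _).2 ⟨(lift hα).toRingHom.injective, ?_⟩
  rw [hK, Nat.card_eq_fintype_card]
  rfl

end F4

open QuadraticAlgebra in
theorem four_le_wt_of_mem_hexacode {K : Type*} [Field K] [Algebra (ZMod 2) K]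
    (hK : Nat.card K = 4) {α : K} (hα : α ^ 2 + α + 1 = 0) {x : Fin 6 → K}
    (hx : x ∈ hexacode α) (hx0 : x ≠ 0) : 4 ≤ wt x := by
  obtain ⟨a, b, d, rfl⟩ := mem_hexacode_iff.1 hx
  set f := F4.lift hα
  have hf := F4.lift_bijective hK hα
  obtain ⟨a, rfl⟩ := hf.2 a
  obtain ⟨b, rfl⟩ := hf.2 b
  obtain ⟨d, rfl⟩ := hf.2 d
  have hword : hexacodeWord α (f a) (f b) (f d) = f ∘ hexacodeWord ω a b d := by
    rw [map_comp_hexacodeWord, F4.lift_omega]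
  rw [hword, wt_comp_of_injective hf.1 (map_zero f)]
  have habd : (a, b, d) ≠ 0 := by
    rintro ⟨⟩
    simp [hexacodeWord] at hx0
  rw [wt]
  convert F4.four_le_card_hexacodeWord a b d habd

theorem stmt_5 (α : GaloisField 2 2) (hα : α ^ 2 + α + 1 = 0)
    (c c' : Fin 6 → GaloisField 2 2)
    (hc : c ∈ Submodule.span (GaloisField 2 2)
      ({![1,0,0,1,1,1], ![0,1,0,1,α,α^2], ![0,0,1,1,α^2,α]} :
        Set (Fin 6 → GaloisField 2 2)))
    (hc' : c' ∈ Submodule.span (GaloisField 2 2)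
      ({![1,0,0,1,1,1], ![0,1,0,1,α,α^2], ![0,0,1,1,α^2,α]} :
        Set (Fin 6 → GaloisField 2 2)))
    (hw : wt c = 6) (hw' : wt c' = 6)
    (hns : ∀ t : GaloisField 2 2, c' ≠ t • c) :
    wt (c + c') = 4 := by
  have hcard : Nat.card (GaloisField 2 2) = 4 := GaloisField.card 2 2 two_ne_zero
  have := Fintype.ofFinite (GaloisField 2 2)
  have hC : ∀ x ∈ hexacode α, x ≠ 0 → 4 ≤ wt x := fun x hx hx0 =>
    four_le_wt_of_mem_hexacode hcard hα hx hx0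
  refine wt_add_eq_of_card_eq_mul hC ?_ hc hc' (by simpa using hw) (by simpa using hw') hns
  rw [Fintype.card_fin, ← Nat.card_eq_fintype_card, hcard]
end

section
/- Let $\mathcal{C}$ be a linear code over $GF(q)$ defined by the parity-check matrix $H = \begin{bmatrix} I_{\ell} \otimes B_1 \\ A_2 \otimes B_2 \end{bmatrix}$, where $B_1$ is a parity-check matrix of an $[r+\delta-1, r]$ MDS code, $\begin{bmatrix} B_1 \\ B_2 \end{bmatrix}$ is a parity-check matrix of an $[r+\delta-1, r-\nu]$ MDS code (with $B_2$ of size $\nu \times (r+\delta-1)$), and $A_2$ is a $\mu \times \ell$ parity-check matrix of an $[\ell, \ell - \mu]$ MDS code. Then $\mathcal{C}$ has dimension $\ell r - \mu\nu$. -/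
open scoped Classical

/-!
The kernel of `1 ⊗ B1` consists of the vectors whose `ℓ` blocks all lie in `ker B1`, so it has
dimension `ℓ r`. On it, `A2 ⊗ B2` applies `B2` inside each block and then `A2` across the blocks.
Both steps are onto: `A2` by rank–nullity, and `B2` restricted to `ker B1` because
`ker [B1; B2]` has codimension `ν` in `ker B1`. Hence the code, the kernel of `A2 ⊗ B2` on
`ker (1 ⊗ B1)`, has dimension `ℓ r - μ ν`.
-/

open Module LinearMap Matrix
open scoped Kronecker

section RankNullity

variable {K V W : Type*} [Field K] [AddCommGroup V] [Module K V] [AddCommGroup W] [Module K W]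

theorem LinearMap.surjective_of_finrank_ker_add_le [FiniteDimensional K V] [FiniteDimensional K W]
    (f : V →ₗ[K] W) (h : finrank K (ker f) + finrank K W ≤ finrank K V) :
    Function.Surjective f := by
  rw [← range_eq_top]
  apply Submodule.eq_top_of_finrank_eq
  have := f.finrank_range_add_finrank_ker
  have := (range f).finrank_le
  omega

theorem LinearMap.finrank_ker_add_finrank_of_surjective [FiniteDimensional K V] {f : V →ₗ[K] W}
    (hf : Function.Surjective f) : finrank K (ker f) + finrank K W = finrank K V := by
  rw [← f.finrank_range_add_finrank_ker, range_eq_top.mpr hf, finrank_top, add_comm]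

theorem LinearMap.finrank_ker_domRestrict (f : V →ₗ[K] W) (U : Submodule K V) :
    finrank K (ker (f.domRestrict U)) = finrank K ↥(U ⊓ ker f) := by
  rw [ker_domRestrict, ← (Submodule.comapSubtypeEquivOfLe inf_le_left).finrank_eq,
    Submodule.comap_inf, Submodule.comap_subtype_self, top_inf_eq]

end RankNullity

theorem Matrix.ker_mulVecLin_fromRows {R m₁ m₂ n : Type*} [CommSemiring R] [Fintype n]
    (A₁ : Matrix m₁ n R) (A₂ : Matrix m₂ n R) :
    ker (fromRows A₁ A₂).mulVecLin = ker A₁.mulVecLin ⊓ ker A₂.mulVecLin := by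
  ext x
  simp [fromRows_mulVec, funext_iff, Sum.forall]

section Kronecker

variable {R l m n s : Type*} [CommSemiring R] [Fintype l] [Fintype n]

theorem Matrix.kroneckerMap_mulVec_apply (A : Matrix m l R) (B : Matrix s n R)
    (x : l × n → R) (i : m) (k : s) :
    (A ⊗ₖ B *ᵥ x) (i, k) = (A *ᵥ fun j => (B *ᵥ Function.curry x j) k) i := by
  simp only [mulVec, dotProduct, kroneckerMap_apply, Fintype.sum_prod_type, Finset.mul_sum,
    Function.curry]
  exact Finset.sum_congr rfl fun j _ => Finset.sum_congr rfl fun c _ => by ring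

theorem Matrix.one_kroneckerMap_mulVec_apply [DecidableEq l] (B : Matrix s n R)
    (x : l × n → R) (j : l) (k : s) :
    ((1 : Matrix l l R) ⊗ₖ B *ᵥ x) (j, k) = (B *ᵥ Function.curry x j) k := by
  rw [kroneckerMap_mulVec_apply, one_mulVec]

end Kronecker

section KerOneKronecker

variable {F l n s : Type*} [Field F] [Fintype l] [Fintype n] [DecidableEq l]

theorem Matrix.mem_ker_one_kroneckerMap_mulVecLin (B : Matrix s n F) (x : l × n → F) :
    x ∈ ker ((1 : Matrix l l F) ⊗ₖ B).mulVecLin ↔ ∀ j, Function.curry x j ∈ ker B.mulVecLin := by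
  simp only [mem_ker, mulVecLin_apply, funext_iff, Prod.forall, one_kroneckerMap_mulVec_apply,
    Pi.zero_apply]

def Matrix.kerOneKroneckerMapEquivPi (B : Matrix s n F) :
    ker ((1 : Matrix l l F) ⊗ₖ B).mulVecLin ≃ₗ[F] (l → ker B.mulVecLin) where
  toFun x j := ⟨Function.curry x.1 j, (mem_ker_one_kroneckerMap_mulVecLin B x.1).1 x.2 j⟩
  invFun y := ⟨Function.uncurry fun j => (y j).1,
    (mem_ker_one_kroneckerMap_mulVecLin B _).2 fun j => (y j).2⟩
  map_add' _ _ := rfl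
  map_smul' _ _ := rfl
  left_inv _ := rfl
  right_inv _ := rfl

theorem Matrix.finrank_ker_one_kroneckerMap_mulVecLin [Fintype s] (B : Matrix s n F) :
    finrank F (ker ((1 : Matrix l l F) ⊗ₖ B).mulVecLin) =
      Fintype.card l * finrank F (ker B.mulVecLin) := by
  rw [(kerOneKroneckerMapEquivPi B).finrank_eq, finrank_pi_fintype, Finset.sum_const,
    Finset.card_univ, smul_eq_mul]

theorem Matrix.surjective_kroneckerMap_mulVecLin_domRestrict {m t : Type*} [Fintype s]
    (A : Matrix m l F) (B : Matrix t n F) (C : Matrix s n F)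
    (hA : Function.Surjective A.mulVecLin)
    (hB : Function.Surjective (B.mulVecLin.domRestrict (ker C.mulVecLin))) :
    Function.Surjective
      ((A ⊗ₖ B).mulVecLin.domRestrict (ker ((1 : Matrix l l F) ⊗ₖ C).mulVecLin)) := by
  intro z
  choose y hy using fun k => hA fun i => z (i, k)
  choose x hx using fun j => hB fun k => y k j
  refine ⟨(kerOneKroneckerMapEquivPi C).symm x, funext fun ⟨i, k⟩ => ?_⟩
  have hxk : ∀ j, (B *ᵥ (x j).1) k = y k j := fun j => congrFun (hx j) k
  simp only [domRestrict_apply, mulVecLin_apply, kroneckerMap_mulVec_apply]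
  change (A *ᵥ fun j => (B *ᵥ (x j).1) k) i = z (i, k)
  simp only [hxk]
  exact congrFun (hy k) i

end KerOneKronecker

theorem stmt_8_general {F : Type*} [Field F] (ℓ μ ν r δ : ℕ)
    (hμℓ : μ < ℓ) (hνr : ν ≤ r)
    (B1 : Matrix (Fin (δ - 1)) (Fin (r + δ - 1)) F)
    (B2 : Matrix (Fin ν) (Fin (r + δ - 1)) F)
    (A2 : Matrix (Fin μ) (Fin ℓ) F)
    -- `B1` is a parity-check matrix of an `[r+δ-1, r]` MDS code (distance `δ`)
    (hB1k : Module.finrank F (LinearMap.ker B1.mulVecLin) = r)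
    -- the stacked matrix `[B1; B2]` is a parity-check matrix of an
    -- `[r+δ-1, r-ν]` MDS code (distance `δ+ν`)
    (hB12k : Module.finrank F
      (LinearMap.ker (Matrix.fromRows B1 B2).mulVecLin) = r - ν)
    -- `A2` is a parity-check matrix of an `[ℓ, ℓ-μ]` MDS code (distance `μ+1`)
    (hA2k : Module.finrank F (LinearMap.ker A2.mulVecLin) = ℓ - μ) :
    Module.finrank F (LinearMap.ker (Matrix.fromRows
      (Matrix.kroneckerMap (· * ·) (1 : Matrix (Fin ℓ) (Fin ℓ) F) B1)
      (Matrix.kroneckerMap (· * ·) A2 B2)).mulVecLin) = ℓ * r - μ * ν := by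
  rw [ker_mulVecLin_fromRows] at hB12k ⊢
  have hA2 : Function.Surjective A2.mulVecLin := by
    refine A2.mulVecLin.surjective_of_finrank_ker_add_le ?_
    rw [hA2k, finrank_fin_fun, finrank_fin_fun]
    omega
  have hB2 : Function.Surjective (B2.mulVecLin.domRestrict (ker B1.mulVecLin)) := by
    refine surjective_of_finrank_ker_add_le _ ?_
    rw [finrank_ker_domRestrict, hB12k, hB1k, finrank_fin_fun]
    omega
  have hrank := finrank_ker_add_finrank_of_surjective
    (surjective_kroneckerMap_mulVecLin_domRestrict A2 B2 B1 hA2 hB2)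
  rw [finrank_ker_domRestrict, finrank_ker_one_kroneckerMap_mulVecLin, hB1k,
    finrank_fintype_fun_eq_card] at hrank
  simp only [Fintype.card_prod, Fintype.card_fin] at hrank
  omega

theorem stmt_8 {F : Type*} [Field F] (q ℓ μ ν r δ : ℕ) [Fintype F]
    (hq : Fintype.card F = q)
    (hℓ : 1 ≤ ℓ) (hμ : 1 ≤ μ) (hν : 1 ≤ ν) (hμℓ : μ < ℓ) (hνr : ν ≤ r) (hδ : 2 ≤ δ)
    (B1 : Matrix (Fin (δ - 1)) (Fin (r + δ - 1)) F)
    (B2 : Matrix (Fin ν) (Fin (r + δ - 1)) F)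
    (A2 : Matrix (Fin μ) (Fin ℓ) F)
    -- `B1` is a parity-check matrix of an `[r+δ-1, r]` MDS code (distance `δ`)
    (hB1k : Module.finrank F (LinearMap.ker B1.mulVecLin) = r)
    (hB1d : ∀ c ∈ LinearMap.ker B1.mulVecLin, c ≠ 0 → δ ≤ wt c)
    -- the stacked matrix `[B1; B2]` is a parity-check matrix of an
    -- `[r+δ-1, r-ν]` MDS code (distance `δ+ν`)
    (hB12k : Module.finrank F
      (LinearMap.ker (Matrix.fromRows B1 B2).mulVecLin) = r - ν)
    (hB12d : ∀ c ∈ LinearMap.ker (Matrix.fromRows B1 B2).mulVecLin,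
      c ≠ 0 → δ + ν ≤ wt c)
    -- `A2` is a parity-check matrix of an `[ℓ, ℓ-μ]` MDS code (distance `μ+1`)
    (hA2k : Module.finrank F (LinearMap.ker A2.mulVecLin) = ℓ - μ)
    (hA2d : ∀ c ∈ LinearMap.ker A2.mulVecLin, c ≠ 0 → μ + 1 ≤ wt c) :
    Module.finrank F (LinearMap.ker (Matrix.fromRows
      (Matrix.kroneckerMap (· * ·) (1 : Matrix (Fin ℓ) (Fin ℓ) F) B1)
      (Matrix.kroneckerMap (· * ·) A2 B2)).mulVecLin) = ℓ * r - μ * ν :=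
  stmt_8_general ℓ μ ν r δ hμℓ hνr B1 B2 A2 hB1k hB12k hA2k
end

section
/- Under the hypotheses of the generalized tensor product construction, the minimum distance of $\mathcal{C}(\ell, B_1, A_2, B_2)$ is at least $\delta(\mu+1)$ when $r = \nu$, and at least $\min\{\delta(\mu+1), \delta+\nu\}$ when $r > \nu$. -/
/-!
Write a codeword `c` as the matrix `X` whose columns are its `ℓ` blocks; the check equations say
`B₁ X = 0` and `B₂ X A₂ᵀ = 0`. If some nonzero column is also killed by `B₂`, it is a nonzero word
of the `[B₁; B₂]`-code, so `wt c ≥ δ + ν`; when `r = ν` that code is zero, so this cannot happen.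
Otherwise some row of `B₂ X` is a nonzero word of the `A₂`-code, hence at least `μ + 1` columns of
`X` are nonzero words of the `B₁`-code, each of weight at least `δ`.
-/

open scoped Classical

open Matrix
open scoped Kronecker

section Weight

variable {m n F : Type*} [Fintype m] [Fintype n] [Zero F]

lemma wt_vec (X : Matrix n m F) : wt X.vec = ∑ i, wt (Xᵀ i) := by
  simp only [wt, Finset.card_filter]
  exact Fintype.sum_prod_type _

lemma wt_col_le_wt_vec (X : Matrix n m F) (i : m) : wt (Xᵀ i) ≤ wt X.vec :=
  wt_vec X ▸ Finset.single_le_sum (f := fun i => wt (Xᵀ i)) (fun _ _ => Nat.zero_le _)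
    (Finset.mem_univ i)

lemma wt_mul_le_wt_vec {G : Type*} [Zero G] (X : Matrix n m F) (v : m → G) (d : ℕ)
    (h : ∀ i, v i ≠ 0 → d ≤ wt (Xᵀ i)) : wt v * d ≤ wt X.vec := by
  rw [wt_vec]
  calc wt v * d = ∑ i ∈ Finset.univ.filter (v · ≠ 0), d := by simp [wt]
    _ ≤ ∑ i ∈ Finset.univ.filter (v · ≠ 0), wt (Xᵀ i) :=
        Finset.sum_le_sum fun i hi => h i (Finset.mem_filter.1 hi).2
    _ ≤ ∑ i, wt (Xᵀ i) := Finset.sum_le_sum_of_subset (Finset.filter_subset _ _)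

end Weight

section TensorCode

variable {k p s m n R : Type*} [Fintype m] [Fintype n] [CommSemiring R]
  {B₁ : Matrix k n R} {B₂ : Matrix p n R} {A₂ : Matrix s m R}

lemma vec_mem_ker_fromRows_kronecker_iff [DecidableEq m] (X : Matrix n m R) :
    X.vec ∈ LinearMap.ker (fromRows ((1 : Matrix m m R) ⊗ₖ B₁) (A₂ ⊗ₖ B₂)).mulVecLin ↔
      B₁ * X = 0 ∧ B₂ * X * A₂ᵀ = 0 := by
  rw [LinearMap.mem_ker, mulVecLin_apply, fromRows_mulVec, ← Sum.elim_zero_zero, Sum.elim_eq_iff,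
    ← vec_mul_eq_mulVec, kronecker_mulVec_vec, ← vec_zero, vec_inj, ← vec_zero, vec_inj]

lemma mul_le_wt_or_exists_mem_ker_fromRows [DecidableEq m] {d₁ d₂ : ℕ}
    (hB₁ : ∀ x ∈ LinearMap.ker B₁.mulVecLin, x ≠ 0 → d₁ ≤ wt x)
    (hA₂ : ∀ v ∈ LinearMap.ker A₂.mulVecLin, v ≠ 0 → d₂ ≤ wt v) {c : m × n → R}
    (hc : c ∈ LinearMap.ker (fromRows ((1 : Matrix m m R) ⊗ₖ B₁) (A₂ ⊗ₖ B₂)).mulVecLin)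
    (hc₀ : c ≠ 0) :
    d₁ * d₂ ≤ wt c ∨ ∃ x ∈ LinearMap.ker (fromRows B₁ B₂).mulVecLin, x ≠ 0 ∧ wt x ≤ wt c := by
  let X : Matrix n m R := of fun j i => c (i, j)
  obtain ⟨h₁, h₂⟩ := (vec_mem_ker_fromRows_kronecker_iff X).1 hc
  have hcol : ∀ i, B₁ *ᵥ Xᵀ i = 0 := fun i => funext fun a => congrFun (congrFun h₁ a) i
  by_cases hker : ∃ i, Xᵀ i ≠ 0 ∧ B₂ *ᵥ Xᵀ i = 0
  · obtain ⟨i, hi, hB₂i⟩ := hker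
    refine .inr ⟨Xᵀ i, ?_, hi, wt_col_le_wt_vec X i⟩
    rw [LinearMap.mem_ker, mulVecLin_apply, fromRows_mulVec, hcol i, hB₂i, Sum.elim_zero_zero]
  push Not at hker
  have hX : X ≠ 0 := fun h => hc₀ (congrArg vec h)
  obtain ⟨i₀, hi₀⟩ : ∃ i, Xᵀ i ≠ 0 := Function.ne_iff.1 (transpose_eq_zero.not.2 hX)
  obtain ⟨b, hb⟩ := Function.ne_iff.1 (hker i₀ hi₀)
  set v := (B₂ * X) b
  have hv : v ∈ LinearMap.ker A₂.mulVecLin := by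
    rw [LinearMap.mem_ker, mulVecLin_apply, ← vecMul_transpose]
    exact congrFun h₂ b
  have hv₀ : v ≠ 0 := Function.ne_iff.2 ⟨i₀, hb⟩
  refine .inl ?_
  calc d₁ * d₂ ≤ wt v * d₁ := by rw [mul_comm]; exact Nat.mul_le_mul_right _ (hA₂ v hv hv₀)
    _ ≤ wt X.vec := wt_mul_le_wt_vec X v d₁ fun i hi => hB₁ _ (hcol i) fun h => hi <| by
        change (B₂ *ᵥ Xᵀ i) b = 0
        rw [h, mulVec_zero, Pi.zero_apply]

end TensorCode

theorem stmt_9_general {F : Type*} [Field F] (ℓ μ ν r δ : ℕ)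
    (B1 : Matrix (Fin (δ - 1)) (Fin (r + δ - 1)) F)
    (B2 : Matrix (Fin ν) (Fin (r + δ - 1)) F)
    (A2 : Matrix (Fin μ) (Fin ℓ) F)
    (hB1d : ∀ c ∈ LinearMap.ker B1.mulVecLin, c ≠ 0 → δ ≤ wt c)
    (hB12k : Module.finrank F
      (LinearMap.ker (Matrix.fromRows B1 B2).mulVecLin) = r - ν)
    (hB12d : ∀ c ∈ LinearMap.ker (Matrix.fromRows B1 B2).mulVecLin,
      c ≠ 0 → δ + ν ≤ wt c)
    (hA2d : ∀ c ∈ LinearMap.ker A2.mulVecLin, c ≠ 0 → μ + 1 ≤ wt c) :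
    (r = ν → ∀ c ∈ LinearMap.ker (Matrix.fromRows
        (Matrix.kroneckerMap (· * ·) (1 : Matrix (Fin ℓ) (Fin ℓ) F) B1)
        (Matrix.kroneckerMap (· * ·) A2 B2)).mulVecLin,
      c ≠ 0 → δ * (μ + 1) ≤ wt c) ∧
    (ν < r → ∀ c ∈ LinearMap.ker (Matrix.fromRows
        (Matrix.kroneckerMap (· * ·) (1 : Matrix (Fin ℓ) (Fin ℓ) F) B1)
        (Matrix.kroneckerMap (· * ·) A2 B2)).mulVecLin,
      c ≠ 0 → min (δ * (μ + 1)) (δ + ν) ≤ wt c) := by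
  refine ⟨fun hrν c hc hc₀ => ?_, fun _ c hc hc₀ => ?_⟩
  · obtain h | ⟨x, hx, hx₀, -⟩ := mul_le_wt_or_exists_mem_ker_fromRows hB1d hA2d hc hc₀
    · exact h
    · have hbot := Submodule.finrank_eq_zero.1 (hB12k.trans (hrν ▸ Nat.sub_self ν))
      exact absurd ((Submodule.mem_bot F).1 (hbot ▸ hx)) hx₀
  · obtain h | ⟨x, hx, hx₀, hxc⟩ := mul_le_wt_or_exists_mem_ker_fromRows hB1d hA2d hc hc₀
    · exact (min_le_left _ _).trans h
    · exact (min_le_right _ _).trans ((hB12d x hx hx₀).trans hxc)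

theorem stmt_9 {F : Type*} [Field F] (q ℓ μ ν r δ : ℕ) [Fintype F]
    (hq : Fintype.card F = q)
    (hℓ : 1 ≤ ℓ) (hμ : 1 ≤ μ) (hν : 1 ≤ ν) (hμℓ : μ < ℓ) (hνr : ν ≤ r) (hδ : 2 ≤ δ)
    (B1 : Matrix (Fin (δ - 1)) (Fin (r + δ - 1)) F)
    (B2 : Matrix (Fin ν) (Fin (r + δ - 1)) F)
    (A2 : Matrix (Fin μ) (Fin ℓ) F)
    (hB1k : Module.finrank F (LinearMap.ker B1.mulVecLin) = r)
    (hB1d : ∀ c ∈ LinearMap.ker B1.mulVecLin, c ≠ 0 → δ ≤ wt c)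
    (hB12k : Module.finrank F
      (LinearMap.ker (Matrix.fromRows B1 B2).mulVecLin) = r - ν)
    (hB12d : ∀ c ∈ LinearMap.ker (Matrix.fromRows B1 B2).mulVecLin,
      c ≠ 0 → δ + ν ≤ wt c)
    (hA2k : Module.finrank F (LinearMap.ker A2.mulVecLin) = ℓ - μ)
    (hA2d : ∀ c ∈ LinearMap.ker A2.mulVecLin, c ≠ 0 → μ + 1 ≤ wt c) :
    (r = ν → ∀ c ∈ LinearMap.ker (Matrix.fromRows
        (Matrix.kroneckerMap (· * ·) (1 : Matrix (Fin ℓ) (Fin ℓ) F) B1)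
        (Matrix.kroneckerMap (· * ·) A2 B2)).mulVecLin,
      c ≠ 0 → δ * (μ + 1) ≤ wt c) ∧
    (ν < r → ∀ c ∈ LinearMap.ker (Matrix.fromRows
        (Matrix.kroneckerMap (· * ·) (1 : Matrix (Fin ℓ) (Fin ℓ) F) B1)
        (Matrix.kroneckerMap (· * ·) A2 B2)).mulVecLin,
      c ≠ 0 → min (δ * (μ + 1)) (δ + ν) ≤ wt c) :=
  stmt_9_general ℓ μ ν r δ B1 B2 A2 hB1d hB12k hB12d hA2d
end

section
/- Let $\mathcal{C}$ be a Singleton-optimal $q$-ary $(r,\delta)$-LRC with dimension $k > r$ and minimum distance $d$. If $r \nmid (k-1)$ then $d \leq q$, and if $r \mid (k-1)$ then $d \leq \delta q$. -/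
open scoped Classical

/-- Restriction (puncturing) of a code to the coordinates in `S`. -/
noncomputable def puncture {ι F : Type*} [Fintype ι] [Field F]
    (C : Submodule F (ι → F)) (S : Finset ι) : Submodule F (↥S → F) :=
  C.map (LinearMap.funLeft F F (fun i : ↥S => (i : ι)))

/-- `C` is an `(r, δ)` locally repairable code with repair groups `R`:
the groups cover all coordinates, each has size at most `r + δ - 1`, and
each local (punctured) code has minimum distance at least `δ`. -/
def IsLRC {ι F : Type*} [Fintype ι] [Field F]
    (C : Submodule F (ι → F)) (r δ : ℕ) (R : Finset (Finset ι)) : Prop :=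
  (∀ i : ι, ∃ S ∈ R, i ∈ S) ∧
  (∀ S ∈ R, S.card ≤ r + δ - 1) ∧
  (∀ S ∈ R, ∀ c ∈ puncture C S, c ≠ 0 → δ ≤ wt c)

/-- No coordinate of the code is identically zero. -/
def NoZeroCoord {ι F : Type*} [Fintype ι] [Field F]
    (C : Submodule F (ι → F)) : Prop :=
  ∀ i : ι, ∃ c ∈ C, c i ≠ 0

/-- The Singleton-type bound for `(r, δ)`-LRCs is attained with equality:
`d = n - k + 1 - (⌈k/r⌉ - 1)(δ - 1)`. -/
def SingletonOptimal {ι F : Type*} [Fintype ι] [Field F]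
    (C : Submodule F (ι → F)) (r δ : ℕ) : Prop :=
  (minDist C : ℤ) = (Fintype.card ι : ℤ) - (Module.finrank F C : ℤ) + 1 -
    ((((Module.finrank F C + r - 1) / r : ℕ) : ℤ) - 1) * ((δ : ℤ) - 1)

/-- The dual code of `C` with respect to the standard bilinear form. -/
noncomputable def dualCode {ι F : Type*} [Fintype ι] [Field F]
    (C : Submodule F (ι → F)) : Submodule F (ι → F) where
  carrier := {x | ∀ c ∈ C, ∑ i, x i * c i = 0}
  add_mem' := by
    intro a b ha hb c hc
    simp only [Set.mem_setOf_eq] at ha hb ⊢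
    simp [Pi.add_apply, add_mul, Finset.sum_add_distrib, ha c hc, hb c hc]
  zero_mem' := by
    intro c hc
    simp
  smul_mem' := by
    intro t a ha c hc
    simp only [Set.mem_setOf_eq] at ha ⊢
    simp [Pi.smul_apply, smul_eq_mul, mul_assoc, ← Finset.mul_sum, ha c hc]

/-- Support of a (sub)code: coordinates where some codeword is nonzero. -/
noncomputable def codeSupp {ι F : Type*} [Fintype ι] [Field F]
    (D : Submodule F (ι → F)) : Finset ι :=
  Finset.univ.filter (fun i => ∃ x ∈ D, x i ≠ 0)

/-! Greedily pick repair groups meeting the support of the subcode vanishing on the coordinates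
chosen so far: since a local code has distance `δ`, each group lowers the dimension of that
subcode by at most `r` while costing at least `δ - 1` more coordinates than dimension. After
`t` groups, and then single coordinates until the vanishing subcode is 2-dimensional, we get a
2-dimensional subcode supported on at most `n - k - t (δ - 1) + 2` coordinates. Averaging the
weight over its `q² - 1` nonzero words gives `d (q + 1) ≤ q · |support|`, which Singleton
optimality turns into `d ≤ q (1 + (⌈k/r⌉ - 1 - t) (δ - 1))`. The largest admissible `t` is
`⌈k/r⌉ - 1` if `r ∤ k - 1` and `⌈k/r⌉ - 2` otherwise. -/

open Finset Module

theorem Submodule.finrank_map_add_finrank_inf_ker {K V W : Type*} [Field K] [AddCommGroup V]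
    [Module K V] [AddCommGroup W] [Module K W] [FiniteDimensional K V]
    (D : Submodule K V) (f : V →ₗ[K] W) :
    finrank K (D.map f) + finrank K ↥(D ⊓ LinearMap.ker f) = finrank K D := by
  rw [← LinearMap.range_domRestrict, ← (f.domRestrict D).finrank_range_add_finrank_ker,
    LinearMap.ker_domRestrict, ← Submodule.map_comap_subtype, Submodule.finrank_map_subtype_eq]

theorem LinearMap.card_filter_apply_ne_zero_le {F V : Type*} [Field F] [Fintype F]
    [AddCommGroup V] [Module F V] [Fintype V] (φ : V →ₗ[F] F) :
    #{v | φ v ≠ 0} ≤ Fintype.card F ^ finrank F V - Fintype.card F ^ (finrank F V - 1) := by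
  have hker : finrank F V ≤ finrank F (LinearMap.ker φ) + 1 := by
    have := Submodule.finrank_le (LinearMap.range φ)
    rw [finrank_self] at this
    have := φ.finrank_range_add_finrank_ker
    omega
  have hzero : Fintype.card F ^ (finrank F V - 1) ≤ #{v | φ v = 0} := by
    have hcard : Fintype.card (LinearMap.ker φ) = #{v | φ v = 0} := by
      rw [← Fintype.card_subtype]
      rfl
    rw [← hcard, card_eq_pow_finrank (K := F) (V := LinearMap.ker φ)]
    exact Nat.pow_le_pow_right Fintype.card_pos (by omega)
  have hsplit : #{v | φ v = 0} + #{v | φ v ≠ 0} = #(univ : Finset V) :=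
    card_filter_add_card_filter_not _
  rw [card_univ, card_eq_pow_finrank (K := F) (V := V)] at hsplit
  omega

section

variable {ι κ F : Type*} [Field F]

def restrictTo (S : Finset ι) : (ι → F) →ₗ[F] (S → F) :=
  LinearMap.funLeft F F Subtype.val

@[simp]
theorem restrictTo_apply (S : Finset ι) (x : ι → F) (j : S) : restrictTo S x j = x j := rfl

theorem mem_ker_restrictTo {S : Finset ι} {x : ι → F} :
    x ∈ LinearMap.ker (restrictTo S) ↔ ∀ i ∈ S, x i = 0 := by
  simp [funext_iff]

theorem wt_restrictTo (S : Finset ι) (x : ι → F) : wt (restrictTo S x) = #{i ∈ S | x i ≠ 0} := by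
  rw [wt, card_filter, card_filter, ← sum_coe_sort S]
  rfl

def vanishingSubcode (C : Submodule F (ι → F)) (E : Finset ι) : Submodule F (ι → F) :=
  C ⊓ LinearMap.ker (restrictTo E)

variable {C : Submodule F (ι → F)} {E : Finset ι}

theorem mem_vanishingSubcode {x : ι → F} :
    x ∈ vanishingSubcode C E ↔ x ∈ C ∧ ∀ i ∈ E, x i = 0 := by
  rw [vanishingSubcode, Submodule.mem_inf, mem_ker_restrictTo]

theorem vanishingSubcode_empty (C : Submodule F (ι → F)) : vanishingSubcode C ∅ = C := by
  ext x
  simp [mem_vanishingSubcode]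

theorem vanishingSubcode_inf_ker_restrictTo (C : Submodule F (ι → F)) (E S : Finset ι) :
    vanishingSubcode C E ⊓ LinearMap.ker (restrictTo S) = vanishingSubcode C (E ∪ S) := by
  ext x
  simp only [Submodule.mem_inf, mem_vanishingSubcode, mem_ker_restrictTo, mem_union, or_imp,
    forall_and, and_assoc]

theorem notMem_of_mem_vanishingSubcode {c : ι → F} {i : ι} (hc : c ∈ vanishingSubcode C E)
    (hci : c i ≠ 0) : i ∉ E :=
  fun hi => hci ((mem_vanishingSubcode.mp hc).2 i hi)

theorem exists_mem_vanishingSubcode_ne_zero (h : finrank F (vanishingSubcode C E) ≠ 0) :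
    ∃ c ∈ vanishingSubcode C E, ∃ i, c i ≠ 0 := by
  obtain ⟨c, hc, hc0⟩ := Submodule.exists_mem_ne_zero_of_ne_bot (p := vanishingSubcode C E)
    fun h' => h (by rw [h', finrank_bot])
  exact ⟨c, hc, Function.ne_iff.mp hc0⟩

variable [Fintype ι] [Fintype κ]

theorem wt_eq_card_filter {x : ι → F} {T : Finset ι} (h : ∀ i ∉ T, x i = 0) :
    wt x = #{i ∈ T | x i ≠ 0} := by
  rw [wt]
  congr 1
  ext i
  simp only [mem_filter, mem_univ, true_and]
  exact ⟨fun hi => ⟨by_contra fun hT => hi (h i hT), hi⟩, And.right⟩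

theorem finrank_map_restrictTo_le (D : Submodule F (ι → F)) (S : Finset ι) :
    finrank F (D.map (restrictTo S)) ≤ #S :=
  (Submodule.finrank_le _).trans (by simp)

theorem finrank_add_le_card_of_lt_wt {D : Submodule F (κ → F)} {d : ℕ} (hD : D ≠ ⊥)
    (hw : ∀ y ∈ D, y ≠ 0 → d < wt y) : finrank F D + d ≤ Fintype.card κ := by
  obtain ⟨y, hyD, hy⟩ := (Submodule.ne_bot_iff D).mp hD
  have hd : d ≤ #(univ : Finset κ) := (hw y hyD hy).le.trans (card_filter_le _ _)
  obtain ⟨A, -, hA⟩ := exists_subset_card_eq hd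
  have hinj : D ⊓ LinearMap.ker (restrictTo (F := F) Aᶜ) = ⊥ := by
    refine (Submodule.eq_bot_iff _).mpr fun x ⟨hxD, hx⟩ => by_contra fun hx0 => ?_
    have hsupp : ∀ i ∉ A, x i = 0 := fun i hi => mem_ker_restrictTo.mp hx i (mem_compl.mpr hi)
    have := (wt_eq_card_filter hsupp).trans_le (card_filter_le _ _)
    exact (hw x hxD hx0).not_ge (hA ▸ this)
  have := D.finrank_map_add_finrank_inf_ker (restrictTo Aᶜ)
  rw [hinj, finrank_bot] at this
  have := finrank_map_restrictTo_le D Aᶜ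
  rw [card_compl, hA] at this
  rw [card_univ] at hd
  omega

theorem finrank_map_restrictTo_add_finrank_vanishingSubcode (C : Submodule F (ι → F))
    (E S : Finset ι) :
    finrank F ((vanishingSubcode C E).map (restrictTo S)) +
      finrank F (vanishingSubcode C (E ∪ S)) = finrank F (vanishingSubcode C E) := by
  rw [← vanishingSubcode_inf_ker_restrictTo]
  exact Submodule.finrank_map_add_finrank_inf_ker _ _

theorem finrank_vanishingSubcode_insert {c : ι → F} {i : ι} (hc : c ∈ vanishingSubcode C E)
    (hci : c i ≠ 0) :
    finrank F (vanishingSubcode C (insert i E)) + 1 = finrank F (vanishingSubcode C E) := by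
  have hpos : 0 < finrank F ((vanishingSubcode C E).map (restrictTo {i})) := by
    refine Submodule.one_le_finrank_iff.mpr ((Submodule.ne_bot_iff _).mpr
      ⟨restrictTo {i} c, Submodule.mem_map_of_mem hc, fun h0 => hci ?_⟩)
    simpa using congrFun h0 ⟨i, mem_singleton_self i⟩
  have hle := finrank_map_restrictTo_le (vanishingSubcode C E) {i}
  have := finrank_map_restrictTo_add_finrank_vanishingSubcode C E {i}
  rw [card_singleton] at hle
  rw [← union_singleton] at *
  omega

theorem finrank_vanishingSubcode_add_le {δ : ℕ} (hδ : 1 ≤ δ) {S : Finset ι}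
    (hloc : ∀ c ∈ puncture C S, c ≠ 0 → δ ≤ wt c) {c : ι → F} {i : ι}
    (hc : c ∈ vanishingSubcode C E) (hiS : i ∈ S) (hci : c i ≠ 0) :
    finrank F (vanishingSubcode C E) + (δ - 1) ≤
      finrank F (vanishingSubcode C (E ∪ S)) + #(S \ E) := by
  set D := (vanishingSubcode C E).map (restrictTo (S \ E))
  have hD : D ≠ ⊥ := by
    refine (Submodule.ne_bot_iff _).mpr
      ⟨restrictTo (S \ E) c, Submodule.mem_map_of_mem hc, fun h0 => hci ?_⟩
    simpa using congrFun h0 ⟨i, mem_sdiff.mpr ⟨hiS, notMem_of_mem_vanishingSubcode hc hci⟩⟩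
  have hw : ∀ y ∈ D, y ≠ 0 → δ - 1 < wt y := by
    rintro _ ⟨x, hx, rfl⟩ hy
    have hxS : restrictTo S x ≠ 0 := fun h0 =>
      hy (funext fun j => by simpa using congrFun h0 ⟨j, (mem_sdiff.mp j.2).1⟩)
    have hwS : δ ≤ wt (restrictTo S x) := hloc _ ⟨x, (mem_vanishingSubcode.mp hx).1, rfl⟩ hxS
    have hfilter : {j ∈ S \ E | x j ≠ 0} = {j ∈ S | x j ≠ 0} := by
      ext j
      simp only [mem_filter, mem_sdiff]
      exact ⟨fun h => ⟨h.1.1, h.2⟩,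
        fun h => ⟨⟨h.1, notMem_of_mem_vanishingSubcode hx h.2⟩, h.2⟩⟩
    rw [wt_restrictTo] at hwS ⊢
    rw [hfilter]
    omega
  have hsingleton := finrank_add_le_card_of_lt_wt hD hw
  have hrank : finrank F D + finrank F (vanishingSubcode C (E ∪ S)) =
      finrank F (vanishingSubcode C E) := by
    rw [← union_sdiff_self_eq_union]
    exact finrank_map_restrictTo_add_finrank_vanishingSubcode C E (S \ E)
  rw [Fintype.card_coe] at hsingleton
  omega

theorem exists_finrank_vanishingSubcode_eq {m : ℕ} (hm : m ≤ finrank F (vanishingSubcode C E)) :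
    ∃ E', finrank F (vanishingSubcode C E') = m ∧
      #E + finrank F (vanishingSubcode C E) ≤ #E' + m := by
  obtain ⟨j, hj⟩ := Nat.exists_eq_add_of_le hm
  clear hm
  induction j generalizing E with
  | zero => exact ⟨E, hj, by omega⟩
  | succ j ih =>
    obtain ⟨c, hc, i, hci⟩ := exists_mem_vanishingSubcode_ne_zero (C := C) (E := E) (by omega)
    have hdrop := finrank_vanishingSubcode_insert hc hci
    obtain ⟨E', hE', hcard⟩ := ih (E := insert i E) (by omega)
    rw [card_insert_of_notMem (notMem_of_mem_vanishingSubcode hc hci)] at hcard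
    exact ⟨E', hE', by omega⟩

theorem IsLRC.exists_vanishingSubcode {r δ : ℕ} {R : Finset (Finset ι)} (hC : IsLRC C r δ R)
    (hδ : 1 ≤ δ) (t : ℕ) (ht : t * r < finrank F C) :
    ∃ E : Finset ι, finrank F C ≤ finrank F (vanishingSubcode C E) + t * r ∧
      finrank F C + t * (δ - 1) ≤ #E + finrank F (vanishingSubcode C E) := by
  obtain ⟨hcover, hsize, hloc⟩ := hC
  induction t with
  | zero =>
    refine ⟨∅, ?_⟩
    rw [vanishingSubcode_empty]
    simp
  | succ t ih =>
    simp only [add_mul, one_mul] at ht ⊢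
    obtain ⟨E, hdim, hcard⟩ := ih (by omega)
    obtain ⟨c, hc, i, hci⟩ := exists_mem_vanishingSubcode_ne_zero (C := C) (E := E) (by omega)
    obtain ⟨S, hSR, hiS⟩ := hcover i
    have hstep := finrank_vanishingSubcode_add_le hδ (hloc S hSR) hc hiS hci
    have hS : #(S \ E) ≤ r + δ - 1 := (card_le_card sdiff_subset).trans (hsize S hSR)
    have hunion := card_sdiff_add_card S E
    rw [union_comm] at hunion
    exact ⟨E ∪ S, by omega, by omega⟩

variable [Fintype F]

theorem sum_wt_le (D : Submodule F (ι → F)) {T : Finset ι} (hT : ∀ x ∈ D, ∀ i ∉ T, x i = 0) :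
    ∑ x : D, wt (x : ι → F) ≤
      #T * (Fintype.card F ^ finrank F D - Fintype.card F ^ (finrank F D - 1)) :=
  calc ∑ x : D, wt (x : ι → F) = ∑ x : D, #{i ∈ T | (x : ι → F) i ≠ 0} :=
        sum_congr rfl fun x _ => wt_eq_card_filter (hT x x.2)
    _ = ∑ i ∈ T, #(univ.filter fun x : D => (x : ι → F) i ≠ 0) := by
        simp only [card_filter]
        exact sum_comm
    _ ≤ ∑ i ∈ T, (Fintype.card F ^ finrank F D - Fintype.card F ^ (finrank F D - 1)) :=
        sum_le_sum fun i _ => ((LinearMap.proj i).comp D.subtype).card_filter_apply_ne_zero_le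
    _ = _ := by rw [sum_const, smul_eq_mul]

theorem minDist_mul_le_sum_wt {D : Submodule F (ι → F)} (hDC : D ≤ C) :
    minDist C * (Fintype.card F ^ finrank F D - 1) ≤ ∑ x : D, wt (x : ι → F) :=
  calc minDist C * (Fintype.card F ^ finrank F D - 1)
      = ∑ x ∈ (univ : Finset D).erase 0, minDist C := by
        rw [sum_const, card_erase_of_mem (mem_univ (0 : D)), card_univ,
          card_eq_pow_finrank (K := F) (V := D), smul_eq_mul, mul_comm]
    _ ≤ ∑ x ∈ (univ : Finset D).erase 0, wt (x : ι → F) := sum_le_sum fun x hx =>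
        Nat.sInf_le ⟨x, hDC x.2, by simpa using (mem_erase.mp hx).1, rfl⟩
    _ ≤ _ := sum_le_sum_of_subset (erase_subset _ _)

theorem minDist_mul_succ_le_of_finrank_eq_two {D : Submodule F (ι → F)} (hDC : D ≤ C)
    (hD : finrank F D = 2) {T : Finset ι} (hT : ∀ x ∈ D, ∀ i ∉ T, x i = 0) :
    minDist C * (Fintype.card F + 1) ≤ #T * Fintype.card F := by
  have h := (minDist_mul_le_sum_wt hDC).trans (sum_wt_le D hT)
  obtain ⟨s, hs⟩ : ∃ s, Fintype.card F = s + 1 := Nat.exists_eq_add_of_le' Fintype.card_pos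
  have hs0 : 0 < s := by have : 1 < Fintype.card F := Fintype.one_lt_card; omega
  have h1 : (s + 1) ^ 2 - 1 = s * (s + 2) := Nat.sub_eq_of_eq_add (by ring)
  have h2 : (s + 1) ^ 2 - (s + 1) ^ (2 - 1) = s * (s + 1) := Nat.sub_eq_of_eq_add (by ring)
  rw [hD, hs, h1, h2] at h
  rw [hs]
  refine Nat.le_of_mul_le_mul_left ?_ hs0
  linarith

theorem IsLRC.exists_minDist_mul_succ_le {r δ : ℕ} {R : Finset (Finset ι)} (hC : IsLRC C r δ R)
    (hδ : 1 ≤ δ) {t : ℕ} (ht : t * r + 2 ≤ finrank F C) :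
    ∃ E : Finset ι, finrank F C + t * (δ - 1) ≤ #E + 2 ∧
      minDist C * (Fintype.card F + 1) ≤ (Fintype.card ι - #E) * Fintype.card F := by
  obtain ⟨E₀, hdim, hcard⟩ := hC.exists_vanishingSubcode hδ t (by omega)
  obtain ⟨E, hE, hcardE⟩ := exists_finrank_vanishingSubcode_eq (C := C) (E := E₀) (m := 2)
    (by omega)
  refine ⟨E, by omega, ?_⟩
  rw [← card_compl]
  exact minDist_mul_succ_le_of_finrank_eq_two inf_le_left hE fun x hx i hi =>
    (mem_vanishingSubcode.mp hx).2 i (notMem_compl.mp hi)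

theorem SingletonOptimal.minDist_le {r δ : ℕ} {R : Finset (Finset ι)}
    (hopt : SingletonOptimal C r δ) (hC : IsLRC C r δ R) (hr : 1 ≤ r) (hδ : 1 ≤ δ) {t x : ℕ}
    (htx : t + x = (finrank F C - 1) / r) (ht : t * r + 2 ≤ finrank F C) :
    minDist C ≤ Fintype.card F * (1 + x * (δ - 1)) := by
  obtain ⟨E, hE, hd⟩ := hC.exists_minDist_mul_succ_le hδ ht
  have hceil : (finrank F C + r - 1) / r = (finrank F C - 1) / r + 1 := by
    rw [show finrank F C + r - 1 = finrank F C - 1 + r by omega, Nat.add_div_right _ hr]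
  have hopt' : minDist C + finrank F C + (t + x) * (δ - 1) = Fintype.card ι + 1 := by
    have h : (minDist C : ℤ) + finrank F C + (t + x : ℕ) * (δ - 1 : ℕ) = Fintype.card ι + 1 := by
      rw [hopt, hceil, htx]
      push_cast [Nat.cast_sub hδ]
      ring
    exact_mod_cast h
  rw [add_mul] at hopt'
  have hEn : #E ≤ Fintype.card ι := card_le_univ E
  have hsupp : Fintype.card ι - #E ≤ minDist C + (1 + x * (δ - 1)) := by omega
  have := Nat.mul_le_mul_right (Fintype.card F) hsupp
  linarith

end

theorem stmt_12_general {ι F : Type*} [Fintype ι] [Field F] [Fintype F] (q : ℕ)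
    (C : Submodule F (ι → F)) (r δ : ℕ) (R : Finset (Finset ι))
    (hq : Fintype.card F = q)
    (hr : 1 ≤ r) (hδ : 2 ≤ δ)
    (hLRC : IsLRC C r δ R)
    (hopt : SingletonOptimal C r δ)
    (hk : r < Module.finrank F C) :
    (¬ r ∣ (Module.finrank F C - 1) → minDist C ≤ q) ∧
    (r ∣ (Module.finrank F C - 1) → minDist C ≤ δ * q) := by
  subst hq
  have hdiv := Nat.div_add_mod (finrank F C - 1) r
  refine ⟨fun hndvd => ?_, fun hdvd => ?_⟩
  · have hmod : (finrank F C - 1) % r ≠ 0 := fun h => hndvd (Nat.dvd_of_mod_eq_zero h)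
    have := hopt.minDist_le hLRC hr (by omega) (add_zero _) (by rw [mul_comm]; omega)
    simpa using this
  · rw [Nat.mod_eq_zero_of_dvd hdvd, add_zero] at hdiv
    have hb : 1 ≤ (finrank F C - 1) / r := (Nat.le_div_iff_mul_le hr).mpr (by omega)
    have := hopt.minDist_le hLRC hr (by omega) (Nat.sub_add_cancel hb)
      (by rw [Nat.sub_one_mul, mul_comm]; omega)
    rwa [one_mul, Nat.add_sub_cancel' (by omega), mul_comm] at this

theorem stmt_12 {ι F : Type*} [Fintype ι] [Field F] [Fintype F] (q : ℕ)
    (C : Submodule F (ι → F)) (r δ : ℕ) (R : Finset (Finset ι))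
    (hq : Fintype.card F = q)
    (hr : 1 ≤ r) (hδ : 2 ≤ δ)
    (hLRC : IsLRC C r δ R) (hnz : NoZeroCoord C)
    (hopt : SingletonOptimal C r δ)
    (hk : r < Module.finrank F C) :
    (¬ r ∣ (Module.finrank F C - 1) → minDist C ≤ q) ∧
    (r ∣ (Module.finrank F C - 1) → minDist C ≤ δ * q) :=
  stmt_12_general q C r δ R hq hr hδ hLRC hopt hk
end
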